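/- Tensor Product of Block-Encoded Operators (Lemma B.2): Let U_A be an (α,a,ε₀)-block-encoding of an n-qubit matrix A ∈ ℂ^{2^n×2^n} and U_B a (β,b,ε₁)-block-encoding of an m-qubit matrix B ∈ ℂ^{2^m×2^m}. Let Π be the register-permutation unitary on ℂ^{2^a} ⊗ ℂ^{2^n} ⊗ ℂ^{2^b} ⊗ ℂ^{2^m} that swaps the second and third tensor factors (mapping |x⟩|y⟩|z⟩|w⟩ ↦ |x⟩|z⟩|y⟩|w⟩), so that Π(|0⟩_{a+b} ⊗ I_{n+m}) = (|0⟩_a ⊗ I_n) ⊗ (|0⟩_b ⊗ I_m). Then V := Π†(U_A ⊗ U_B)Π is an (αβ, a+b, ε₀β + ε₁α + ε₀ε₁)-block-encoding of A ⊗ B. -/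
import Mathlib


open scoped Kronecker Matrix

noncomputable section

/-- The spectral (ℓ²→ℓ²) operator norm of a matrix. -/
def specNorm {𝕜 : Type*} [RCLike 𝕜] {m n : Type*} [Fintype m] [Fintype n] [DecidableEq n]
    (A : Matrix m n 𝕜) : ℝ :=
  ‖LinearMap.toContinuousLinearMap (Matrix.toEuclideanLin A)‖

/-- The top-left block `(⟨0| ⊗ I) U (|0⟩ ⊗ I)` of a matrix. -/
def topLeft {I N : Type*} [Zero I] (U : Matrix (I × N) (I × N) ℂ) : Matrix N N ℂ :=
  Matrix.of fun i j => U (0, i) (0, j)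

/-- `U` is an `(α, ·, ε)`-block-encoding of `A`. -/
def IsBE {I N : Type*} [Fintype I] [DecidableEq I] [Zero I] [Fintype N] [DecidableEq N]
    (U : Matrix (I × N) (I × N) ℂ) (α ε : ℝ) (A : Matrix N N ℂ) : Prop :=
  U ∈ Matrix.unitaryGroup (I × N) ℂ ∧ specNorm (A - (α : ℂ) • topLeft U) ≤ ε

/-- The register permutation `|x⟩|y⟩|z⟩|w⟩ ↦ |x⟩|z⟩|y⟩|w⟩`, moving both ancilla
registers to the front; conjugation by it via `Matrix.reindex` is the typed form of
`Π† (·) Π`, and `Π(|0⟩_{a+b} ⊗ I_{n+m}) = (|0⟩_a ⊗ I_n) ⊗ (|0⟩_b ⊗ I_m)`. -/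
def regSwap (A N B M : Type*) : (A × N) × (B × M) ≃ (A × B) × (N × M) where
  toFun p := ((p.1.1, p.2.1), (p.1.2, p.2.2))
  invFun q := ((q.1.1, q.2.1), (q.1.2, q.2.2))
  left_inv _ := rfl
  right_inv _ := rfl

open scoped Matrix.Norms.L2Operator

lemma specNorm_eq_norm {m n : Type*} [Fintype m] [Fintype n] [DecidableEq n]
    (A : Matrix m n ℂ) : specNorm A = ‖A‖ := rfl

namespace BEAux

open Matrix

lemma norm_le_of_sq_le {m n : Type*} [Fintype m] [Fintype n] [DecidableEq n]
    (A : Matrix m n ℂ) (C : ℝ) (hC : 0 ≤ C)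
    (h : ∀ x : n → ℂ, ∑ i, ‖A.mulVec x i‖ ^ 2 ≤ C ^ 2 * ∑ j, ‖x j‖ ^ 2) :
    ‖A‖ ≤ C := by
  rw [Matrix.l2_opNorm_def]
  refine ContinuousLinearMap.opNorm_le_bound _ hC fun x => ?_
  have hx : ‖x‖ = Real.sqrt (∑ j, ‖x j‖ ^ 2) := EuclideanSpace.norm_eq x
  have hAx : ‖(LinearEquiv.trans Matrix.toEuclideanLin LinearMap.toContinuousLinearMap A) x‖
      = Real.sqrt (∑ i, ‖A.mulVec (fun j => x j) i‖ ^ 2) := by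
    rw [EuclideanSpace.norm_eq]
    rfl
  rw [hx, hAx, ← Real.sqrt_sq hC, ← Real.sqrt_mul (by positivity)]
  exact Real.sqrt_le_sqrt (h fun j => x j)

lemma sq_sum_mulVec_le {m n : Type*} [Fintype m] [Fintype n] [DecidableEq n]
    (A : Matrix m n ℂ) (y : n → ℂ) :
    ∑ i, ‖A.mulVec y i‖ ^ 2 ≤ ‖A‖ ^ 2 * ∑ j, ‖y j‖ ^ 2 := by
  have h := Matrix.l2_opNorm_mulVec A ((WithLp.equiv 2 (n → ℂ)).symm y)
  have h1 : ‖(EuclideanSpace.equiv m ℂ).symm (A *ᵥ (WithLp.equiv 2 (n → ℂ)).symm y)‖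
      = Real.sqrt (∑ i, ‖A.mulVec y i‖ ^ 2) := by
    rw [EuclideanSpace.norm_eq]; rfl
  have h2 : ‖(WithLp.equiv 2 (n → ℂ)).symm y‖ = Real.sqrt (∑ j, ‖y j‖ ^ 2) := by
    rw [EuclideanSpace.norm_eq]; rfl
  rw [h1, h2] at h
  have h3 : (Real.sqrt (∑ i, ‖A.mulVec y i‖ ^ 2)) ^ 2
      ≤ (‖A‖ * Real.sqrt (∑ j, ‖y j‖ ^ 2)) ^ 2 := by
    apply pow_le_pow_left₀ (Real.sqrt_nonneg _) h 2
  rw [Real.sq_sqrt (by positivity), mul_pow, Real.sq_sqrt (by positivity)] at h3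
  exact h3

lemma norm_reindex_le {m n m' n' : Type*} [Fintype m] [Fintype n] [DecidableEq n]
    [Fintype m'] [Fintype n'] [DecidableEq n']
    (e : m ≃ m') (f : n ≃ n') (A : Matrix m n ℂ) :
    ‖Matrix.reindex e f A‖ ≤ ‖A‖ := by
  refine norm_le_of_sq_le _ _ (norm_nonneg A) fun x => ?_
  have key : ∀ i, (Matrix.reindex e f A).mulVec x i = A.mulVec (fun j => x (f j)) (e.symm i) := by
    intro i
    simp only [Matrix.reindex_apply, Matrix.mulVec, dotProduct, Matrix.submatrix_apply]
    exact (Fintype.sum_equiv f _ _ fun j => by simp).symm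
  calc ∑ i, ‖(Matrix.reindex e f A).mulVec x i‖ ^ 2
      = ∑ i, ‖A.mulVec (fun j => x (f j)) i‖ ^ 2 := by
        rw [← Equiv.sum_comp e.symm (fun i => ‖A.mulVec (fun j => x (f j)) i‖ ^ 2)]
        exact Finset.sum_congr rfl fun i _ => by rw [key]
    _ ≤ ‖A‖ ^ 2 * ∑ j, ‖x (f j)‖ ^ 2 := sq_sum_mulVec_le A _
    _ = ‖A‖ ^ 2 * ∑ j, ‖x j‖ ^ 2 := by
        rw [Equiv.sum_comp f (fun j => ‖x j‖ ^ 2)]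

lemma norm_one_kron_le {I J : Type*} [Fintype I] [DecidableEq I] [Fintype J] [DecidableEq J]
    (B : Matrix J J ℂ) : ‖(1 : Matrix I I ℂ) ⊗ₖ B‖ ≤ ‖B‖ := by
  refine norm_le_of_sq_le _ _ (norm_nonneg B) fun x => ?_
  have key : ∀ i j, ((1 : Matrix I I ℂ) ⊗ₖ B).mulVec x (i, j)
      = B.mulVec (fun l => x (i, l)) j := by
    intro i j
    simp only [Matrix.mulVec, dotProduct, Matrix.kroneckerMap_apply]
    rw [Fintype.sum_prod_type]
    simp [Matrix.one_apply, ite_mul, Finset.sum_ite_eq]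
  calc ∑ p : I × J, ‖((1 : Matrix I I ℂ) ⊗ₖ B).mulVec x p‖ ^ 2
      = ∑ i, ∑ j, ‖B.mulVec (fun l => x (i, l)) j‖ ^ 2 := by
        rw [Fintype.sum_prod_type]
        exact Finset.sum_congr rfl fun i _ => Finset.sum_congr rfl fun j _ => by rw [key]
    _ ≤ ∑ i, ‖B‖ ^ 2 * ∑ l, ‖x (i, l)‖ ^ 2 :=
        Finset.sum_le_sum fun i _ => sq_sum_mulVec_le B _
    _ = ‖B‖ ^ 2 * ∑ p : I × J, ‖x p‖ ^ 2 := by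
        rw [Fintype.sum_prod_type, Finset.mul_sum]

lemma kron_one_eq {I J : Type*} [Fintype I] [DecidableEq I] [Fintype J] [DecidableEq J]
    (A : Matrix I I ℂ) :
    A ⊗ₖ (1 : Matrix J J ℂ)
      = Matrix.reindex (Equiv.prodComm J I) (Equiv.prodComm J I) ((1 : Matrix J J ℂ) ⊗ₖ A) := by
  ext ⟨i, j⟩ ⟨k, l⟩
  simp [Matrix.one_apply, mul_comm]

lemma norm_kron_le {I J : Type*} [Fintype I] [DecidableEq I] [Fintype J] [DecidableEq J]
    (A : Matrix I I ℂ) (B : Matrix J J ℂ) : ‖A ⊗ₖ B‖ ≤ ‖A‖ * ‖B‖ := by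
  have hAB : A ⊗ₖ B = (A ⊗ₖ (1 : Matrix J J ℂ)) * ((1 : Matrix I I ℂ) ⊗ₖ B) := by
    rw [← Matrix.mul_kronecker_mul, mul_one, one_mul]
  rw [hAB]
  calc ‖(A ⊗ₖ (1 : Matrix J J ℂ)) * ((1 : Matrix I I ℂ) ⊗ₖ B)‖
      ≤ ‖A ⊗ₖ (1 : Matrix J J ℂ)‖ * ‖(1 : Matrix I I ℂ) ⊗ₖ B‖ := Matrix.l2_opNorm_mul _ _
    _ ≤ ‖A‖ * ‖B‖ := by
        have h1 : ‖A ⊗ₖ (1 : Matrix J J ℂ)‖ ≤ ‖A‖ := by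
          rw [kron_one_eq A]
          exact (norm_reindex_le _ _ _).trans (norm_one_kron_le A)
        exact mul_le_mul h1 (norm_one_kron_le B) (norm_nonneg _) (norm_nonneg _)

lemma norm_topLeft_le {I N : Type*} [Fintype I] [DecidableEq I] [Zero I]
    [Fintype N] [DecidableEq N] (U : Matrix (I × N) (I × N) ℂ) :
    ‖topLeft U‖ ≤ ‖U‖ := by
  refine norm_le_of_sq_le _ _ (norm_nonneg U) fun x => ?_
  set xt : I × N → ℂ := fun p => if p.1 = 0 then x p.2 else 0 with hxt
  have key : ∀ i, (topLeft U).mulVec x i = U.mulVec xt (0, i) := by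
    intro i
    simp only [Matrix.mulVec, dotProduct, topLeft, Matrix.of_apply, hxt]
    rw [Fintype.sum_prod_type]
    simp [mul_ite, Finset.sum_ite_eq']
  calc ∑ i, ‖(topLeft U).mulVec x i‖ ^ 2
      = ∑ i, ‖U.mulVec xt (0, i)‖ ^ 2 :=
        Finset.sum_congr rfl fun i _ => by rw [key]
    _ ≤ ∑ p : I × N, ‖U.mulVec xt p‖ ^ 2 := by
        rw [Fintype.sum_prod_type]
        exact Finset.single_le_sum (f := fun k => ∑ i, ‖U.mulVec xt (k, i)‖ ^ 2)
          (fun k _ => by positivity) (Finset.mem_univ 0)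
    _ ≤ ‖U‖ ^ 2 * ∑ p : I × N, ‖xt p‖ ^ 2 := sq_sum_mulVec_le U xt
    _ = ‖U‖ ^ 2 * ∑ j, ‖x j‖ ^ 2 := by
        congr 1
        rw [Fintype.sum_prod_type]
        simp [hxt, apply_ite (‖·‖), Finset.sum_ite_eq']

lemma norm_unitary {N : Type*} [Fintype N] [DecidableEq N] [Nonempty N]
    {U : Matrix N N ℂ} (hU : U ∈ Matrix.unitaryGroup N ℂ) : ‖U‖ = 1 := by
  have h1 : Uᴴ * U = 1 := by
    simpa [Matrix.star_eq_conjTranspose] using (Unitary.mem_iff.mp hU).1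
  have h2 := Matrix.l2_opNorm_conjTranspose_mul_self U
  rw [h1] at h2
  have h3 : ‖(1 : Matrix N N ℂ)‖ = 1 := by
    rw [Matrix.cstar_norm_def, _root_.map_one]
    exact ContinuousLinearMap.norm_id
  rw [h3] at h2
  rcases mul_self_eq_one_iff.mp h2.symm with h | h
  · exact h
  · nlinarith [norm_nonneg U]

end BEAux


/-- **Tensor product of block-encoded operators** (Lemma B.2).
If `U_A` is an `(α, a, ε₀)`-block-encoding of `A` and `U_B` a `(β, b, ε₁)`-block-encoding
of `B`, then `V = Π†(U_A ⊗ U_B)Π` is an `(αβ, a + b, ε₀β + ε₁α + ε₀ε₁)`-block-encoding of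
`A ⊗ B`. -/
theorem tensor_product_of_block_encodings
    (a n b m : ℕ) (α β ε₀ ε₁ : ℝ)
    (hα : 0 ≤ α) (hβ : 0 ≤ β) (hε₀ : 0 ≤ ε₀) (hε₁ : 0 ≤ ε₁)
    (UA : Matrix (Fin (2^a) × Fin (2^n)) (Fin (2^a) × Fin (2^n)) ℂ)
    (UB : Matrix (Fin (2^b) × Fin (2^m)) (Fin (2^b) × Fin (2^m)) ℂ)
    (A : Matrix (Fin (2^n)) (Fin (2^n)) ℂ) (B : Matrix (Fin (2^m)) (Fin (2^m)) ℂ)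
    (hUA : IsBE UA α ε₀ A) (hUB : IsBE UB β ε₁ B) :
    IsBE (Matrix.reindex (regSwap (Fin (2^a)) (Fin (2^n)) (Fin (2^b)) (Fin (2^m)))
        (regSwap (Fin (2^a)) (Fin (2^n)) (Fin (2^b)) (Fin (2^m))) (UA ⊗ₖ UB))
      (α * β) (ε₀ * β + ε₁ * α + ε₀ * ε₁) (A ⊗ₖ B) := by
  obtain ⟨hUAu, hA⟩ := hUA
  obtain ⟨hUBu, hB⟩ := hUB
  set e := regSwap (Fin (2^a)) (Fin (2^n)) (Fin (2^b)) (Fin (2^m)) with he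
  constructor
  · -- unitarity
    rw [Matrix.mem_unitaryGroup_iff]
    have hstar : star (Matrix.reindex e e (UA ⊗ₖ UB))
        = Matrix.reindex e e (star (UA ⊗ₖ UB)) := by
      ext p q
      simp [Matrix.star_eq_conjTranspose, Matrix.conjTranspose_apply]
    have hk : star (UA ⊗ₖ UB) = (star UA) ⊗ₖ (star UB) := by
      ext ⟨i, j⟩ ⟨k, l⟩
      simp [Matrix.star_eq_conjTranspose, Matrix.conjTranspose_apply, mul_comm]
    have ha : UA * star UA = 1 := (Unitary.mem_iff.mp hUAu).2
    have hb : UB * star UB = 1 := (Unitary.mem_iff.mp hUBu).2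
    rw [hstar, Matrix.reindex_apply, Matrix.reindex_apply, Matrix.submatrix_mul_equiv,
      hk, ← Matrix.mul_kronecker_mul, ha, hb, Matrix.one_kronecker_one,
      Matrix.submatrix_one_equiv]
  · -- norm bound
    rw [specNorm_eq_norm] at hA hB ⊢
    have htl : topLeft (Matrix.reindex e e (UA ⊗ₖ UB)) = topLeft UA ⊗ₖ topLeft UB := by
      ext ⟨i, j⟩ ⟨k, l⟩
      rfl
    rw [htl]
    set At := topLeft UA with hAt
    set Bt := topLeft UB with hBt
    have hnA : ‖(α : ℂ) • At‖ ≤ α := by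
      rw [norm_smul, Complex.norm_real, Real.norm_eq_abs, abs_of_nonneg hα]
      have h1 : ‖At‖ ≤ 1 :=
        (BEAux.norm_topLeft_le UA).trans (le_of_eq (BEAux.norm_unitary hUAu))
      calc α * ‖At‖ ≤ α * 1 := mul_le_mul_of_nonneg_left h1 hα
        _ = α := mul_one α
    have hnB : ‖(β : ℂ) • Bt‖ ≤ β := by
      rw [norm_smul, Complex.norm_real, Real.norm_eq_abs, abs_of_nonneg hβ]
      have h1 : ‖Bt‖ ≤ 1 :=
        (BEAux.norm_topLeft_le UB).trans (le_of_eq (BEAux.norm_unitary hUBu))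
      calc β * ‖Bt‖ ≤ β * 1 := mul_le_mul_of_nonneg_left h1 hβ
        _ = β := mul_one β
    have hdecomp : A ⊗ₖ B - ((α * β : ℝ) : ℂ) • (At ⊗ₖ Bt)
        = ((α : ℂ) • At) ⊗ₖ (B - (β : ℂ) • Bt)
          + (A - (α : ℂ) • At) ⊗ₖ ((β : ℂ) • Bt)
          + (A - (α : ℂ) • At) ⊗ₖ (B - (β : ℂ) • Bt) := by
      ext ⟨i, j⟩ ⟨k, l⟩
      simp only [Matrix.kroneckerMap_apply, Matrix.sub_apply, Matrix.smul_apply,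
        Matrix.add_apply, smul_eq_mul, Complex.ofReal_mul]
      ring
    rw [hdecomp]
    have hX : ‖((α : ℂ) • At) ⊗ₖ (B - (β : ℂ) • Bt)‖ ≤ α * ε₁ :=
      (BEAux.norm_kron_le _ _).trans
        (mul_le_mul hnA hB (norm_nonneg _) hα)
    have hY : ‖(A - (α : ℂ) • At) ⊗ₖ ((β : ℂ) • Bt)‖ ≤ ε₀ * β :=
      (BEAux.norm_kron_le _ _).trans
        (mul_le_mul hA hnB (norm_nonneg _) hε₀)
    have hZ : ‖(A - (α : ℂ) • At) ⊗ₖ (B - (β : ℂ) • Bt)‖ ≤ ε₀ * ε₁ :=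
      (BEAux.norm_kron_le _ _).trans
        (mul_le_mul hA hB (norm_nonneg _) hε₀)
    calc ‖((α : ℂ) • At) ⊗ₖ (B - (β : ℂ) • Bt)
          + (A - (α : ℂ) • At) ⊗ₖ ((β : ℂ) • Bt)
          + (A - (α : ℂ) • At) ⊗ₖ (B - (β : ℂ) • Bt)‖
        ≤ ‖((α : ℂ) • At) ⊗ₖ (B - (β : ℂ) • Bt)‖
          + ‖(A - (α : ℂ) • At) ⊗ₖ ((β : ℂ) • Bt)‖
          + ‖(A - (α : ℂ) • At) ⊗ₖ (B - (β : ℂ) • Bt)‖ := norm_add₃_le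
      _ ≤ ε₀ * β + ε₁ * α + ε₀ * ε₁ := by nlinarith
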